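/- arXiv:1706.05747 — 2 statements merged into one kernel-verified Lean document; each statement's English description precedes it below -/
import Mathlib

section
/- Let μ be a σ-finite measure on (0,∞) satisfying assumption (H): ∫₀^∞ (r ∨ r^p) μ(dr) < ∞ for some 1 < p < 2. For N ≥ 1 and k ≥ 1 set w_{k,N} = (1/(k+1)!) ∫₀^∞ (Nr)^{k+1} e^{−Nr} μ(dr), and define π̄_N = ∑_{k≥1} ((k/N)² ∧ 1) w_{k,N} δ_{k/N} and π̄(dz) = (z² ∧ 1) μ(dz). Then for every z > 0 such that μ({z}) = 0 (i.e. z is a continuity point of y ↦ π̄((0,y])), one has π̄_N((0,z]) = ∑_{1 ≤ k ≤ Nz} ((k/N)² ∧ 1) w_{k,N} → π̄((0,z]) = ∫_{(0,z]} (y² ∧ 1) μ(dy) as N → ∞. -/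
open MeasureTheory

open Filter




namespace Stmt13Aux

noncomputable def pp (l : ℝ) (m : ℕ) : ℝ := l ^ m * Real.exp (-l) / m.factorial

lemma pp_nonneg {l : ℝ} (hl : 0 ≤ l) (m : ℕ) : 0 ≤ pp l m := by
  unfold pp
  positivity

lemma pp_eq (l : ℝ) (m : ℕ) : pp l m = (l ^ m / m.factorial) * Real.exp (-l) := by
  unfold pp; ring

lemma summable_q (l : ℝ) : Summable (fun m : ℕ => l ^ m / m.factorial) :=
  Real.summable_pow_div_factorial l

lemma q_succ (l : ℝ) (m : ℕ) :
    ((m : ℝ) + 1) * (l ^ (m+1) / (m+1).factorial) = l * (l ^ m / m.factorial) := by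
  rw [Nat.factorial_succ, pow_succ]
  push_cast
  have h1 : ((m : ℝ) + 1) ≠ 0 := by positivity
  have h2 : ((m.factorial : ℝ)) ≠ 0 := Nat.cast_ne_zero.2 m.factorial_ne_zero
  field_simp

lemma summable_mq (l : ℝ) : Summable (fun m : ℕ => (m : ℝ) * (l ^ m / m.factorial)) := by
  rw [← summable_nat_add_iff 1]
  have : (fun m : ℕ => ((m + 1 : ℕ) : ℝ) * (l ^ (m+1) / (m+1).factorial))
      = fun m : ℕ => l * (l ^ m / m.factorial) := by
    funext m; push_cast; exact q_succ l m
  rw [this]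
  exact (summable_q l).mul_left l

lemma summable_m2q (l : ℝ) : Summable (fun m : ℕ => (m : ℝ)^2 * (l ^ m / m.factorial)) := by
  rw [← summable_nat_add_iff 1]
  have : (fun m : ℕ => ((m + 1 : ℕ) : ℝ)^2 * (l ^ (m+1) / (m+1).factorial))
      = fun m : ℕ => l * ((m : ℝ) * (l ^ m / m.factorial)) + l * (l ^ m / m.factorial) := by
    funext m
    push_cast
    have := q_succ l m
    calc ((m:ℝ)+1)^2 * (l ^ (m+1) / (m+1).factorial)
        = ((m:ℝ)+1) * (((m:ℝ)+1) * (l ^ (m+1) / (m+1).factorial)) := by ring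
      _ = ((m:ℝ)+1) * (l * (l ^ m / m.factorial)) := by rw [this]
      _ = l * ((m : ℝ) * (l ^ m / m.factorial)) + l * (l ^ m / m.factorial) := by ring
  rw [this]
  exact (((summable_mq l).mul_left l).add ((summable_q l).mul_left l))

lemma tsum_q (l : ℝ) : ∑' m : ℕ, l ^ m / m.factorial = Real.exp l := by
  rw [Real.exp_eq_exp_ℝ, NormedSpace.exp_eq_tsum_div]

lemma tsum_mq (l : ℝ) : ∑' m : ℕ, (m : ℝ) * (l ^ m / m.factorial) = l * Real.exp l := by
  rw [tsum_eq_zero_add' ((summable_nat_add_iff 1).2 (summable_mq l))]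
  simp only [Nat.cast_zero, zero_mul, zero_add]
  have : (fun m : ℕ => ((m + 1 : ℕ) : ℝ) * (l ^ (m+1) / (m+1).factorial))
      = fun m : ℕ => l * (l ^ m / m.factorial) := by
    funext m; push_cast; exact q_succ l m
  push_cast at this ⊢
  rw [this]
  rw [tsum_mul_left, tsum_q]

lemma tsum_m2q (l : ℝ) :
    ∑' m : ℕ, (m : ℝ)^2 * (l ^ m / m.factorial) = (l + l^2) * Real.exp l := by
  rw [tsum_eq_zero_add' ((summable_nat_add_iff 1).2 (summable_m2q l))]
  simp only [Nat.cast_zero, zero_pow, zero_mul, zero_add]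
  have : (fun m : ℕ => ((m + 1 : ℕ) : ℝ)^2 * (l ^ (m+1) / (m+1).factorial))
      = fun m : ℕ => l * ((m : ℝ) * (l ^ m / m.factorial)) + l * (l ^ m / m.factorial) := by
    funext m
    push_cast
    have h := q_succ l m
    calc ((m:ℝ)+1)^2 * (l ^ (m+1) / (m+1).factorial)
        = ((m:ℝ)+1) * (((m:ℝ)+1) * (l ^ (m+1) / (m+1).factorial)) := by ring
      _ = ((m:ℝ)+1) * (l * (l ^ m / m.factorial)) := by rw [h]
      _ = l * ((m : ℝ) * (l ^ m / m.factorial)) + l * (l ^ m / m.factorial) := by ring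
  push_cast at this ⊢
  norm_num
  rw [this]
  rw [Summable.tsum_add ((summable_mq l).mul_left l) ((summable_q l).mul_left l),
    tsum_mul_left, tsum_mul_left, tsum_mq, tsum_q]
  ring

end Stmt13Aux
namespace Stmt13Aux

lemma pp_eq' (l : ℝ) : pp l = fun m => (l ^ m / m.factorial) * Real.exp (-l) :=
  funext (pp_eq l)

lemma summable_pp (l : ℝ) : Summable (pp l) := by
  rw [pp_eq']; exact (summable_q l).mul_right _

lemma tsum_pp (l : ℝ) : ∑' m : ℕ, pp l m = 1 := by
  rw [pp_eq']; rw [tsum_mul_right, tsum_q, ← Real.exp_add]; simp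

lemma summable_mpp (l : ℝ) : Summable (fun m : ℕ => (m:ℝ) * pp l m) := by
  have : (fun m : ℕ => (m:ℝ) * pp l m)
      = fun m : ℕ => ((m:ℝ) * (l ^ m / m.factorial)) * Real.exp (-l) := by
    funext m; rw [pp_eq]; ring
  rw [this]; exact (summable_mq l).mul_right _

lemma tsum_mpp (l : ℝ) : ∑' m : ℕ, (m:ℝ) * pp l m = l := by
  have : (fun m : ℕ => (m:ℝ) * pp l m)
      = fun m : ℕ => ((m:ℝ) * (l ^ m / m.factorial)) * Real.exp (-l) := by
    funext m; rw [pp_eq]; ring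
  rw [this, tsum_mul_right, tsum_mq, mul_assoc, ← Real.exp_add]; simp

lemma dev_eq (l : ℝ) : (fun m : ℕ => ((m:ℝ) - l)^2 * pp l m)
    = fun m : ℕ => ((m:ℝ)^2 * (l ^ m / m.factorial)
        - (2*l) * ((m:ℝ) * (l ^ m / m.factorial))
        + l^2 * (l ^ m / m.factorial)) * Real.exp (-l) := by
  funext m; rw [pp_eq]; ring

lemma summable_devpp (l : ℝ) : Summable (fun m : ℕ => ((m:ℝ) - l)^2 * pp l m) := by
  rw [dev_eq]
  exact (((summable_m2q l).sub ((summable_mq l).mul_left (2*l))).add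
    ((summable_q l).mul_left (l^2))).mul_right _

lemma tsum_devpp (l : ℝ) : ∑' m : ℕ, ((m:ℝ) - l)^2 * pp l m = l := by
  rw [dev_eq, tsum_mul_right,
    Summable.tsum_add (((summable_m2q l).sub ((summable_mq l).mul_left (2*l))))
      ((summable_q l).mul_left (l^2)),
    Summable.tsum_sub (summable_m2q l) ((summable_mq l).mul_left (2*l)),
    tsum_mul_left, tsum_mul_left, tsum_m2q, tsum_mq, tsum_q]
  have : ((l + l ^ 2) * Real.exp l - 2 * l * (l * Real.exp l) + l ^ 2 * Real.exp l)
      = l * Real.exp l := by ring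
  rw [this, mul_assoc, ← Real.exp_add]; simp

end Stmt13Aux
namespace Stmt13Aux

lemma min_sq_le {t : ℝ} (ht : 0 ≤ t) : min (t^2) 1 ≤ t := by
  rcases le_total t 1 with h | h
  · exact le_trans (min_le_left _ _) (by nlinarith)
  · exact le_trans (min_le_right _ _) h

lemma min_lip (a b : ℝ) : |min a 1 - min b 1| ≤ |a - b| := by
  rcases le_total a 1 with ha | ha <;> rcases le_total b 1 with hb | hb <;>
    rw [abs_le] <;> constructor <;>
    simp [min_eq_left, min_eq_right, ha, hb] <;>
    cases' abs_le.1 (le_refl |a - b|) with h1 h2 <;> linarith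

noncomputable def cc (z : ℝ) (N k : ℕ) : ℝ :=
  if ((k:ℝ)+1)/(N:ℝ) ≤ z then min ((((k:ℝ)+1)/(N:ℝ))^2) 1 else 0

noncomputable def gg (z : ℝ) (N m : ℕ) : ℝ :=
  if 2 ≤ m then cc z N (m-2) else 0

lemma cc_nonneg (z : ℝ) (N k : ℕ) : 0 ≤ cc z N k := by
  unfold cc; split
  · positivity
  · exact le_refl 0

lemma cc_le_one (z : ℝ) (N k : ℕ) : cc z N k ≤ 1 := by
  unfold cc; split
  · exact min_le_right _ _
  · exact zero_le_one

lemma cc_le (z : ℝ) (N k : ℕ) : cc z N k ≤ ((k:ℝ)+1)/(N:ℝ) := by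
  have ht : 0 ≤ ((k:ℝ)+1)/(N:ℝ) := by positivity
  unfold cc; split
  · exact min_sq_le ht
  · exact ht

lemma gg_eq (z : ℝ) (N k : ℕ) : gg z N (k+2) = cc z N k := by
  simp [gg]

lemma gg_nonneg (z : ℝ) (N m : ℕ) : 0 ≤ gg z N m := by
  unfold gg; split
  · exact cc_nonneg _ _ _
  · exact le_refl 0

lemma gg_le_one (z : ℝ) (N m : ℕ) : gg z N m ≤ 1 := by
  unfold gg; split
  · exact cc_le_one _ _ _
  · exact zero_le_one

lemma cc_zero (z : ℝ) (hz : 0 ≤ z) (k : ℕ) : cc z 0 k = 0 := by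
  simp [cc, hz]

lemma summable_f {l : ℝ} (hl : 0 ≤ l) (z : ℝ) (N : ℕ) :
    Summable (fun k : ℕ => cc z N k * pp l (k+2)) := by
  refine Summable.of_nonneg_of_le (fun k => ?_) (fun k => ?_)
    ((summable_nat_add_iff 2).2 (summable_pp l))
  · exact mul_nonneg (cc_nonneg _ _ _) (pp_nonneg hl _)
  · calc cc z N k * pp l (k+2) ≤ 1 * pp l (k+2) :=
        mul_le_mul_of_nonneg_right (cc_le_one _ _ _) (pp_nonneg hl _)
    _ = pp l (k+2) := one_mul _

lemma summable_gpp {l : ℝ} (hl : 0 ≤ l) (g : ℕ → ℝ) (hg0 : ∀ m, 0 ≤ g m)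
    (hg1 : ∀ m, g m ≤ 1) : Summable (fun m : ℕ => g m * pp l m) := by
  refine Summable.of_nonneg_of_le (fun m => mul_nonneg (hg0 m) (pp_nonneg hl m))
    (fun m => ?_) (summable_pp l)
  calc g m * pp l m ≤ 1 * pp l m := mul_le_mul_of_nonneg_right (hg1 m) (pp_nonneg hl m)
  _ = pp l m := one_mul _

lemma sum_gg (z : ℝ) (N : ℕ) (l : ℝ) :
    ∑' k : ℕ, cc z N k * pp l (k+2) = ∑' m : ℕ, gg z N m * pp l m := by
  have hinj : Function.Injective (fun k : ℕ => k + 2) := fun a b h => by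
    simpa using h
  have hsupp : Function.support (fun m : ℕ => gg z N m * pp l m) ⊆
      Set.range (fun k : ℕ => k + 2) := by
    intro m hm
    by_contra hc
    have hm2 : m < 2 := by
      rcases Nat.lt_or_ge m 2 with h | h
      · exact h
      · exact absurd ⟨m - 2, by simp; omega⟩ hc
    apply hm
    simp [gg, Nat.not_le.2 hm2]
  have := Function.Injective.tsum_eq hinj hsupp
  rw [← this]
  exact tsum_congr fun k => by rw [gg_eq]

set_option maxHeartbeats 1000000 in
lemma tsum_f_le (z r : ℝ) (hr : 0 ≤ r) (N : ℕ) (hN : 1 ≤ N) :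
    ∑' k : ℕ, cc z N k * pp ((N:ℝ)*r) (k+2) ≤ r := by
  have hl : 0 ≤ (N:ℝ)*r := by positivity
  have hNpos : (0:ℝ) < N := by exact_mod_cast hN
  have step1 : ∑' k : ℕ, cc z N k * pp ((N:ℝ)*r) (k+2)
      ≤ ∑' k : ℕ, (((k:ℝ)+2) * pp ((N:ℝ)*r) (k+2)) / N := by
    refine Summable.tsum_le_tsum (fun k => ?_) (summable_f hl z N) ?_
    · have h1 : cc z N k ≤ ((k:ℝ)+2)/(N:ℝ) := le_trans (cc_le z N k)
        (by gcongr <;> norm_num)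
      calc cc z N k * pp ((N:ℝ)*r) (k+2)
          ≤ (((k:ℝ)+2)/(N:ℝ)) * pp ((N:ℝ)*r) (k+2) :=
            mul_le_mul_of_nonneg_right h1 (pp_nonneg hl _)
        _ = (((k:ℝ)+2) * pp ((N:ℝ)*r) (k+2)) / N := by ring
    · have : Summable (fun k : ℕ => ((k+2:ℕ):ℝ) * pp ((N:ℝ)*r) (k+2)) :=
        (summable_nat_add_iff 2).2 (summable_mpp ((N:ℝ)*r))
      have h2 : Summable (fun k : ℕ => (((k:ℝ)+2) * pp ((N:ℝ)*r) (k+2))) := by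
        refine this.congr fun k => by push_cast; ring
      exact h2.div_const _
  have step2 : ∑' k : ℕ, (((k:ℝ)+2) * pp ((N:ℝ)*r) (k+2)) / N
      ≤ ∑' m : ℕ, ((m:ℝ) * pp ((N:ℝ)*r) m) / N := by
    have hg0 : ∀ m : ℕ, 0 ≤ ((m:ℝ) * pp ((N:ℝ)*r) m) / N := fun m =>
      div_nonneg (mul_nonneg (Nat.cast_nonneg m) (pp_nonneg hl m)) (Nat.cast_nonneg N)
    have hptf : ∀ k : ℕ, (((k:ℝ)+2) * pp ((N:ℝ)*r) (k+2)) / N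
        = (((k+2:ℕ):ℝ) * pp ((N:ℝ)*r) (k+2)) / N := fun k => by push_cast; ring
    refine Summable.tsum_le_tsum_of_inj (fun k : ℕ => k + 2) (fun a b h => by simpa using h)
      (fun m _ => hg0 m) (fun k => le_of_eq (hptf k)) ?_ ?_
    · have : Summable (fun k : ℕ => ((k+2:ℕ):ℝ) * pp ((N:ℝ)*r) (k+2)) :=
        (summable_nat_add_iff 2).2 (summable_mpp ((N:ℝ)*r))
      exact (this.congr fun k => by push_cast; ring).div_const _
    · exact (summable_mpp ((N:ℝ)*r)).div_const _
  have step3 : ∑' m : ℕ, ((m:ℝ) * pp ((N:ℝ)*r) m) / N = r := by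
    rw [tsum_div_const, tsum_mpp]
    field_simp
  linarith

end Stmt13Aux

namespace Stmt13Aux

set_option maxHeartbeats 1000000 in
lemma ptwise (z r : ℝ) (hz : 0 < z) (hr : 0 < r) (hrz : r ≠ z) :
    Filter.Tendsto (fun N : ℕ => ∑' k : ℕ, cc z N k * pp ((N:ℝ)*r) (k+2)) Filter.atTop
      (nhds (if r ≤ z then min (r^2) 1 else 0)) := by
  set φ : ℝ := if r ≤ z then min (r^2) 1 else 0 with hφdef
  have hφ0 : 0 ≤ φ := by
    rw [hφdef]; split
    · exact le_min (sq_nonneg r) zero_le_one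
    · exact le_refl 0
  have hφ1 : φ ≤ 1 := by
    rw [hφdef]; split
    · exact min_le_right _ _
    · exact zero_le_one
  rw [Metric.tendsto_atTop]
  intro δ hδ
  set ε : ℝ := min (min 1 (δ/(8*(2*r+1)))) (min (|z - r|/4) (r/2)) with hεdef
  have hzr : |z - r| > 0 := abs_pos.2 (sub_ne_zero.2 (Ne.symm hrz))
  have hε0 : 0 < ε :=
    lt_min (lt_min one_pos (by positivity)) (lt_min (by positivity) (by positivity))
  have hε1 : ε ≤ 1 := le_trans (min_le_left _ _) (min_le_left _ _)
  have hεδ : ε ≤ δ/(8*(2*r+1)) := le_trans (min_le_left _ _) (min_le_right _ _)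
  have hεz : ε ≤ |z - r|/4 := le_trans (min_le_right _ _) (min_le_left _ _)
  have hεr : ε ≤ r/2 := le_trans (min_le_right _ _) (min_le_right _ _)
  obtain ⟨N₁, hN₁⟩ := exists_nat_ge (1/ε)
  obtain ⟨N₂, hN₂⟩ := exists_nat_ge (4/r)
  obtain ⟨N₃, hN₃⟩ := exists_nat_ge (4*r/(ε^2*δ))
  refine ⟨max (max N₁ N₂) (max N₃ 1), fun N hN => ?_⟩
  have hNN₁ : (N₁:ℝ) ≤ N := Nat.cast_le.2 (le_trans (le_trans (le_max_left _ _) (le_max_left _ _)) hN)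
  have hNN₂ : (N₂:ℝ) ≤ N := Nat.cast_le.2 (le_trans (le_trans (le_max_right _ _) (le_max_left _ _)) hN)
  have hNN₃ : (N₃:ℝ) ≤ N := Nat.cast_le.2 (le_trans (le_trans (le_max_left _ _) (le_max_right _ _)) hN)
  have hN1 : 1 ≤ N := le_trans (le_trans (le_max_right _ _) (le_max_right _ _)) hN
  have hNpos : (0:ℝ) < N := by exact_mod_cast hN1
  have hinvN : 1/(N:ℝ) ≤ ε := by
    rw [div_le_iff₀ hNpos]
    have h1 : 1/ε ≤ (N:ℝ) := le_trans hN₁ hNN₁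
    rw [div_le_iff₀ hε0] at h1
    linarith [mul_comm ε (N:ℝ)]
  have h4r : (4:ℝ) ≤ (N:ℝ)*r := by
    have h1 : 4/r ≤ (N:ℝ) := le_trans hN₂ hNN₂
    rw [div_le_iff₀ hr] at h1
    linarith
  have htail : r/(ε^2*(N:ℝ)) ≤ δ/4 := by
    have h1 : 4*r/(ε^2*δ) ≤ (N:ℝ) := le_trans hN₃ hNN₃
    rw [div_le_iff₀ (by positivity)] at h1
    rw [div_le_div_iff₀ (by positivity) (by norm_num : (0:ℝ) < 4)]
    nlinarith
  set l : ℝ := (N:ℝ)*r with hldef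
  have hl : 0 ≤ l := by positivity
  rw [sum_gg z N l]
  have hsg : Summable (fun m : ℕ => gg z N m * pp l m) :=
    summable_gpp hl _ (gg_nonneg z N) (gg_le_one z N)
  have hdiff : (∑' m : ℕ, gg z N m * pp l m) - φ = ∑' m : ℕ, (gg z N m - φ) * pp l m := by
    have h1 : ∑' m : ℕ, (gg z N m * pp l m - φ * pp l m)
        = (∑' m : ℕ, gg z N m * pp l m) - ∑' m : ℕ, φ * pp l m :=
      Summable.tsum_sub hsg ((summable_pp l).mul_left φ)
    have h2 : ∑' m : ℕ, φ * pp l m = φ := by rw [tsum_mul_left, tsum_pp, mul_one]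
    rw [h2] at h1
    rw [← h1]
    exact tsum_congr fun m => by ring
  -- pointwise bound
  have hbound : ∀ m : ℕ, |(gg z N m - φ) * pp l m|
      ≤ (δ/4) * pp l m + (1/(ε^2*(N:ℝ)^2)) * (((m:ℝ) - l)^2 * pp l m) := by
    intro m
    have hppn := pp_nonneg hl m
    rw [abs_mul, abs_of_nonneg hppn]
    rcases le_or_gt |(m:ℝ)/N - r| ε with hnear | hfar
    · -- near case: |gg - φ| ≤ δ/4
      have hkey : |gg z N m - φ| ≤ δ/4 := by
        by_cases hle : r ≤ z
        · have hrlt : r < z := lt_of_le_of_ne hle hrz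
          have hφeq : φ = min (r^2) 1 := if_pos hle
          have hεz' : ε ≤ (z - r)/4 := by rwa [abs_of_pos (by linarith)] at hεz
          have hlow : r - ε ≤ (m:ℝ)/N := by
            have := abs_le.1 hnear
            linarith [this.1]
          have hhigh : (m:ℝ)/N ≤ r + ε := by
            have := abs_le.1 hnear
            linarith [this.2]
          have hm2 : 2 ≤ m := by
            have hge : (2:ℝ) ≤ (m:ℝ) := by
              have h1 : (r - ε)*(N:ℝ) ≤ (m:ℝ) := (le_div_iff₀ hNpos).1 hlow
              nlinarith
            exact_mod_cast hge
          have hcast : ((m-2:ℕ):ℝ)+1 = (m:ℝ)-1 := by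
            have h2 : (2:ℕ) ≤ m := hm2
            push_cast [h2]
            ring
          have hggm : gg z N m = cc z N (m-2) := if_pos hm2
          set a : ℝ := ((m:ℝ)-1)/N with hadef
          have ha0 : 0 ≤ a := by
            have : (2:ℝ) ≤ (m:ℝ) := by exact_mod_cast hm2
            have : (0:ℝ) ≤ (m:ℝ)-1 := by linarith
            positivity
          have haleq : a ≤ (m:ℝ)/N := by
            rw [hadef]
            gcongr
            linarith
          have hamr : |a - r| ≤ 2*ε := by
            have ha' : a = (m:ℝ)/N - 1/N := by rw [hadef]; ring
            have : a - r = ((m:ℝ)/N - r) + (-(1/(N:ℝ))) := by rw [ha']; ring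
            rw [this]
            calc |((m:ℝ)/N - r) + (-(1/(N:ℝ)))| ≤ |(m:ℝ)/N - r| + |(-(1/(N:ℝ)))| := abs_add_le _ _
            _ ≤ ε + ε := by
                rw [abs_neg, abs_of_nonneg (by positivity : (0:ℝ) ≤ 1/(N:ℝ))]
                exact add_le_add hnear hinvN
            _ = 2*ε := by ring
          have haz : a ≤ z := by
            have h1 : a ≤ r + ε := le_trans haleq hhigh
            linarith
          have hccm : cc z N (m-2) = min (a^2) 1 := by
            unfold cc
            rw [hcast]
            exact if_pos haz
          rw [hggm, hccm, hφeq]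
          calc |min (a^2) 1 - min (r^2) 1| ≤ |a^2 - r^2| := min_lip _ _
          _ = |a - r| * |a + r| := by rw [← abs_mul]; ring_nf
          _ ≤ (2*ε) * (2*r+1) := by
              apply mul_le_mul hamr ?_ (abs_nonneg _) (by positivity)
              rw [abs_of_nonneg (by linarith : (0:ℝ) ≤ a + r)]
              have := le_trans haleq hhigh
              linarith
          _ ≤ δ/4 := by
              have h2r : (0:ℝ) < 2*r+1 := by linarith
              have h3 := (le_div_iff₀ (by positivity : (0:ℝ) < 8*(2*r+1))).1 hεδ
              nlinarith
        · have hzlt : z < r := lt_of_not_ge hle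
          have hφeq : φ = 0 := if_neg hle
          have hεz' : ε ≤ (r - z)/4 := by
            rwa [abs_of_neg (by linarith : z - r < 0), neg_sub] at hεz
          have hggm : gg z N m = 0 := by
            by_cases hm2 : 2 ≤ m
            · have hcast : ((m-2:ℕ):ℝ)+1 = (m:ℝ)-1 := by
                have h2 : (2:ℕ) ≤ m := hm2
                push_cast [h2]
                ring
              have hlow : r - ε ≤ (m:ℝ)/N := by
                have := abs_le.1 hnear
                linarith [this.1]
              have hgt : ¬ (((m:ℝ)-1)/N ≤ z) := by
                push_neg
                have h1 : (m:ℝ)/N - 1/N = ((m:ℝ)-1)/N := by ring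
                have h2 : r - ε - 1/N ≤ ((m:ℝ)-1)/N := by rw [← h1]; linarith
                have : r - 2*ε ≤ ((m:ℝ)-1)/N := by linarith
                linarith
              unfold gg cc
              rw [if_pos hm2, hcast, if_neg hgt]
            · exact if_neg hm2
          rw [hggm, hφeq]
          simp
          positivity
      calc |gg z N m - φ| * pp l m ≤ (δ/4) * pp l m :=
          mul_le_mul_of_nonneg_right hkey hppn
      _ ≤ _ := le_add_of_nonneg_right (by positivity)
    · -- far case
      have h1 : |gg z N m - φ| ≤ 1 :=
        abs_le.2 ⟨by linarith [gg_nonneg z N m, gg_le_one z N m],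
          by linarith [gg_nonneg z N m, gg_le_one z N m]⟩
      have e0 : (N:ℝ) * ((m:ℝ)/(N:ℝ)) = (m:ℝ) := by
        rw [mul_comm, div_mul_cancel₀ _ (ne_of_gt hNpos)]
      have hml : ((m:ℝ) - l)^2 = (N:ℝ)^2 * ((m:ℝ)/N - r)^2 := by
        have e1 : (N:ℝ) * ((m:ℝ)/N - r) = (m:ℝ) - l := by rw [hldef, mul_sub, e0]
        rw [← e1]
        ring
      have h2 : ε^2*(N:ℝ)^2 ≤ ((m:ℝ) - l)^2 := by
        rw [hml]
        have h3 : ε^2 ≤ ((m:ℝ)/N - r)^2 := by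
          nlinarith [abs_nonneg ((m:ℝ)/N - r), sq_abs ((m:ℝ)/N - r)]
        nlinarith [sq_nonneg (N:ℝ)]
      have h4 : (1:ℝ) ≤ (1/(ε^2*(N:ℝ)^2)) * ((m:ℝ) - l)^2 := by
        rw [div_mul_eq_mul_div, one_mul, le_div_iff₀ (by positivity)]
        linarith
      calc |gg z N m - φ| * pp l m ≤ 1 * pp l m := mul_le_mul_of_nonneg_right h1 hppn
      _ ≤ ((1/(ε^2*(N:ℝ)^2)) * ((m:ℝ) - l)^2) * pp l m :=
          mul_le_mul_of_nonneg_right h4 hppn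
      _ = (1/(ε^2*(N:ℝ)^2)) * (((m:ℝ) - l)^2 * pp l m) := by ring
      _ ≤ _ := le_add_of_nonneg_left (by positivity)
  -- conclude
  have hrhs : Summable (fun m : ℕ => (δ/4) * pp l m
      + (1/(ε^2*(N:ℝ)^2)) * (((m:ℝ) - l)^2 * pp l m)) :=
    ((summable_pp l).mul_left (δ/4)).add ((summable_devpp l).mul_left _)
  have habs : Summable (fun m : ℕ => |(gg z N m - φ) * pp l m|) :=
    Summable.of_nonneg_of_le (fun m => abs_nonneg _) hbound hrhs
  have hfin : dist (∑' m : ℕ, gg z N m * pp l m) φ ≤ δ/2 := by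
    rw [Real.dist_eq, hdiff]
    have habs' : Summable (fun m : ℕ => ‖(gg z N m - φ) * pp l m‖) := by
      simpa only [Real.norm_eq_abs] using habs
    calc |∑' m : ℕ, (gg z N m - φ) * pp l m| ≤ ∑' m : ℕ, |(gg z N m - φ) * pp l m| := by
          simpa only [Real.norm_eq_abs] using norm_tsum_le_tsum_norm habs'
      _ ≤ ∑' m : ℕ, ((δ/4) * pp l m + (1/(ε^2*(N:ℝ)^2)) * (((m:ℝ) - l)^2 * pp l m)) :=
          Summable.tsum_le_tsum hbound habs hrhs
      _ = δ/4 + (1/(ε^2*(N:ℝ)^2)) * l := by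
          rw [Summable.tsum_add ((summable_pp l).mul_left (δ/4)) ((summable_devpp l).mul_left _),
            tsum_mul_left, tsum_mul_left, tsum_pp, tsum_devpp, mul_one]
      _ ≤ δ/4 + δ/4 := by
          have : (1/(ε^2*(N:ℝ)^2)) * l = r/(ε^2*(N:ℝ)) := by
            rw [hldef]
            field_simp
          rw [this]
          linarith
      _ = δ/2 := by ring
  linarith [hfin, hδ]
end Stmt13Aux

open Stmt13Aux

/-- Under assumption (H), for every continuity point `z > 0`
(i.e. `μ({z}) = 0`) one has
`π̄_N((0,z]) = ∑_{1 ≤ k ≤ Nz} ((k/N)² ∧ 1) w_{k,N} → ∫_{(0,z]} (y² ∧ 1) μ(dy)`. -/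
theorem stmt13 (μ : Measure ℝ) [SigmaFinite μ]
    (p : ℝ) (hp1 : 1 < p) (hp2 : p < 2)
    (hH : Integrable (fun r => max r (r ^ p)) (μ.restrict (Set.Ioi 0)))
    (w : ℕ → ℕ → ℝ)
    (hw : ∀ N k : ℕ, 1 ≤ N → 1 ≤ k → w N k =
      (1 / (Nat.factorial (k + 1) : ℝ)) *
        ∫ r in Set.Ioi (0:ℝ), ((N:ℝ) * r) ^ (k + 1) * Real.exp (-(N:ℝ) * r) ∂μ) :
    ∀ z : ℝ, 0 < z → μ {z} = 0 →
      Filter.Tendsto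
        (fun N : ℕ => ∑' k : ℕ,
          if ((k:ℝ) + 1) / N ≤ z then
            min ((((k:ℝ) + 1) / N) ^ 2) 1 * w N (k + 1)
          else 0)
        Filter.atTop (nhds (∫ y in Set.Ioc (0:ℝ) z, min (y ^ 2) 1 ∂μ)) := by
  intro z hz hzμ
  have hcont : ∀ (N : ℕ) (k : ℕ),
      Continuous (fun r : ℝ => cc z N k * pp ((N:ℝ)*r) (k+2)) := by
    intro N k
    unfold pp
    fun_prop
  -- Step A
  have hstepA : ∀ N : ℕ, 1 ≤ N →
      (∑' k : ℕ, if ((k:ℝ) + 1) / N ≤ z then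
          min ((((k:ℝ) + 1) / N) ^ 2) 1 * w N (k + 1) else 0)
      = ∫ r in Set.Ioi (0:ℝ), (∑' k : ℕ, cc z N k * pp ((N:ℝ)*r) (k+2)) ∂μ := by
    intro N hN
    have hterm : ∀ k : ℕ,
        (if ((k:ℝ) + 1) / N ≤ z then
            min ((((k:ℝ) + 1) / N) ^ 2) 1 * w N (k + 1) else 0)
        = ∫ r in Set.Ioi (0:ℝ), cc z N k * pp ((N:ℝ)*r) (k+2) ∂μ := by
      intro k
      have hw' := hw N (k+1) hN (by omega)
      have h1 : (if ((k:ℝ) + 1) / N ≤ z then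
          min ((((k:ℝ) + 1) / N) ^ 2) 1 * w N (k + 1) else 0)
          = cc z N k * w N (k+1) := by
        unfold cc
        push_cast
        split <;> simp
      rw [h1, hw', ← mul_assoc, ← integral_const_mul]
      refine integral_congr_ae (ae_of_all _ fun r => ?_)
      show cc z N k * (1 / ((k+1+1).factorial:ℝ)) * (((N:ℝ)*r)^(k+1+1) * Real.exp (-(N:ℝ)*r))
          = cc z N k * pp ((N:ℝ)*r) (k+2)
      unfold pp
      have h2 : k+1+1 = k+2 := rfl
      rw [h2, neg_mul]
      ring
    rw [tsum_congr hterm]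
    rw [← integral_tsum (fun k => (hcont N k).aestronglyMeasurable) ?_]
    rw [← lintegral_tsum (fun k => (hcont N k).measurable.enorm.aemeasurable)]
    refine ne_of_lt (lt_of_le_of_lt ?_ hH.2)
    apply lintegral_mono_ae
    filter_upwards [ae_restrict_mem measurableSet_Ioi] with r hr
    have hrpos : (0:ℝ) < r := hr
    have hl : (0:ℝ) ≤ (N:ℝ)*r := mul_nonneg (Nat.cast_nonneg N) hrpos.le
    have hnn : ∀ k : ℕ, 0 ≤ cc z N k * pp ((N:ℝ)*r) (k+2) := fun k =>
      mul_nonneg (cc_nonneg _ _ _) (pp_nonneg hl _)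
    have hsum : Summable (fun k : ℕ => cc z N k * pp ((N:ℝ)*r) (k+2)) :=
      summable_f hl z N
    calc ∑' k : ℕ, (‖cc z N k * pp ((N:ℝ)*r) (k+2)‖₊ : ENNReal)
        = ∑' k : ℕ, ENNReal.ofReal (cc z N k * pp ((N:ℝ)*r) (k+2)) := by
          refine tsum_congr fun k => ?_
          change ‖cc z N k * pp ((N:ℝ)*r) (k+2)‖ₑ = _
          rw [← ofReal_norm, Real.norm_of_nonneg (hnn k)]
      _ = ENNReal.ofReal (∑' k : ℕ, cc z N k * pp ((N:ℝ)*r) (k+2)) :=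
          (ENNReal.ofReal_tsum_of_nonneg hnn hsum).symm
      _ ≤ ENNReal.ofReal (max r (r^p)) :=
          ENNReal.ofReal_le_ofReal
            (le_trans (tsum_f_le z r hrpos.le N hN) (le_max_left _ _))
      _ ≤ (‖max r (r^p)‖₊ : ENNReal) := Real.ofReal_le_enorm _
  -- main convergence by dominated convergence
  have hz0 : (μ.restrict (Set.Ioi 0)) {z} = 0 :=
    le_antisymm (le_trans (Measure.restrict_apply_le _ _) hzμ.le) (zero_le)
  have hne : ∀ᵐ r ∂(μ.restrict (Set.Ioi 0)), r ≠ z := by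
    rw [ae_iff]
    convert hz0 using 2
    ext x
    simp
  have hmain : Filter.Tendsto
      (fun N : ℕ => ∫ r in Set.Ioi (0:ℝ), (∑' k : ℕ, cc z N k * pp ((N:ℝ)*r) (k+2)) ∂μ)
      Filter.atTop
      (nhds (∫ r in Set.Ioi (0:ℝ), (if r ≤ z then min (r^2) 1 else 0) ∂μ)) := by
    apply tendsto_integral_of_dominated_convergence (fun r => max r (r^p))
    · intro N
      refine aestronglyMeasurable_of_tendsto_ae atTop
        (f := fun n r => ∑ k ∈ Finset.range n, cc z N k * pp ((N:ℝ)*r) (k+2)) ?_ ?_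
      · intro n
        exact (continuous_finset_sum _ fun k _ => hcont N k).aestronglyMeasurable
      · filter_upwards [ae_restrict_mem measurableSet_Ioi] with r hr
        have hl : (0:ℝ) ≤ (N:ℝ)*r := mul_nonneg (Nat.cast_nonneg N) (le_of_lt hr)
        exact (summable_f hl z N).hasSum.tendsto_sum_nat
    · exact hH
    · intro N
      filter_upwards [ae_restrict_mem measurableSet_Ioi] with r hr
      have hrpos : (0:ℝ) < r := hr
      have hl : (0:ℝ) ≤ (N:ℝ)*r := mul_nonneg (Nat.cast_nonneg N) hrpos.le
      have h0 : 0 ≤ ∑' k : ℕ, cc z N k * pp ((N:ℝ)*r) (k+2) :=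
        tsum_nonneg fun k => mul_nonneg (cc_nonneg _ _ _) (pp_nonneg hl _)
      rw [Real.norm_of_nonneg h0]
      rcases Nat.eq_zero_or_pos N with hN0 | hN1
      · subst hN0
        have : ∀ k : ℕ, cc z 0 k * pp ((0:ℕ)*r) (k+2) = 0 := fun k => by
          rw [cc_zero z hz.le k, zero_mul]
        rw [tsum_congr this, tsum_zero]
        exact le_max_of_le_left hrpos.le
      · exact le_trans (tsum_f_le z r hrpos.le N hN1) (le_max_left _ _)
    · filter_upwards [ae_restrict_mem measurableSet_Ioi, hne] with r hr hrne
      exact ptwise z r hz hr hrne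
  have hlim_eq : ∫ r in Set.Ioi (0:ℝ), (if r ≤ z then min (r^2) 1 else 0) ∂μ
      = ∫ y in Set.Ioc (0:ℝ) z, min (y^2) 1 ∂μ := by
    have hind : (fun r : ℝ => if r ≤ z then min (r^2) 1 else 0)
        = (Set.Iic z).indicator (fun y => min (y^2) 1) := by
      funext r
      simp [Set.indicator_apply, Set.mem_Iic]
    rw [hind, setIntegral_indicator measurableSet_Iic, Set.Ioi_inter_Iic]
  rw [← hlim_eq]
  apply hmain.congr'
  filter_upwards [eventually_ge_atTop 1] with N hN
  exact (hstepA N hN).symm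
end

section
/- Let μ be a σ-finite measure on (0,∞) satisfying assumption (H), with μ((0,1)) > 0 and μ((1,∞)) > 0, and N ≥ 1 an integer. With the quantities α_{−,N}, q_k^{−,N}, p_k^{−,N}, α_{+,N}, q_0^{+,N}, d_{1,N}, q_0^{1,N}, γ_{1,N} defined in the context, let Γ_N^−, ε̂_N, and Ξ be independent random variables where Γ_N^− takes values in the positive integers with P(Γ_N^− = k) = p_k^{−,N}, ε̂_N ∈ {0,1} with P(ε̂_N = 0) = α_{−,N}(1 − q_0^{−,N})/γ_{1,N}, and Ξ has the standard exponential distribution. Set T^{N,−} = Γ_N^− 𝟙{ε̂_N = 0} − Ξ · E[Γ_N^− 𝟙{ε̂_N = 0}]. Then there exists a constant C (depending only on μ) such that for all N ≥ 1, E[(T^{N,−})²] ≤ C N / γ_{1,N}. -/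
open MeasureTheory Set ENNReal

lemma stmt16_sq_sub_le (a b : ℝ) : (a - b)^2 ≤ 2*a^2 + 2*b^2 := by nlinarith [sq_nonneg (a+b)]


-- series bound
lemma stmt16_series (x : ℝ) (hx : 0 ≤ x) :
    (∑' k : ℕ, ENNReal.ofReal (((k : ℝ) + 1) ^ 2 * x ^ (k + 2) / (Nat.factorial (k + 2))))
      ≤ ENNReal.ofReal (x ^ 2 * Real.exp x) := by
  have hterm : ∀ k : ℕ, ((k : ℝ) + 1) ^ 2 * x ^ (k + 2) / (Nat.factorial (k + 2))
      ≤ x ^ 2 * (x ^ k / Nat.factorial k) := by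
    intro k
    have hfac : ((Nat.factorial (k+2) : ℝ)) = ((k+2) * (k+1) : ℕ) * Nat.factorial k := by
      push_cast [Nat.factorial_succ]
      ring
    have hk0 : (0:ℝ) < Nat.factorial k := by positivity
    have hk2 : (0:ℝ) < Nat.factorial (k+2) := by positivity
    rw [div_le_iff₀ hk2]
    have hxp : 0 ≤ x ^ k := pow_nonneg hx k
    have key : ((k:ℝ)+1)^2 * Nat.factorial k ≤ Nat.factorial (k+2) := by
      rw [hfac]
      push_cast
      nlinarith [hk0]
    calc ((k : ℝ) + 1) ^ 2 * x ^ (k + 2)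
        = (x ^ 2 * x ^ k) * ((k:ℝ)+1)^2 := by ring
      _ ≤ (x ^ 2 * x ^ k) * (Nat.factorial (k+2) / Nat.factorial k) := by
          apply mul_le_mul_of_nonneg_left _ (by positivity)
          rw [le_div_iff₀ hk0]
          nlinarith [key, hk0]
      _ = x ^ 2 * (x ^ k / Nat.factorial k) * Nat.factorial (k+2) := by
          field_simp
  have hsum2 : Summable (fun k : ℕ => x ^ 2 * (x ^ k / Nat.factorial k)) :=
    (Real.summable_pow_div_factorial x).mul_left _
  calc (∑' k : ℕ, ENNReal.ofReal (((k : ℝ) + 1) ^ 2 * x ^ (k + 2) / (Nat.factorial (k + 2))))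
      ≤ ∑' k : ℕ, ENNReal.ofReal (x ^ 2 * (x ^ k / Nat.factorial k)) :=
        ENNReal.tsum_le_tsum fun k => ENNReal.ofReal_le_ofReal (hterm k)
    _ = ENNReal.ofReal (∑' k : ℕ, x ^ 2 * (x ^ k / Nat.factorial k)) := by
        rw [ENNReal.ofReal_tsum_of_nonneg (fun k => by positivity) hsum2]
    _ = ENNReal.ofReal (x ^ 2 * Real.exp x) := by
        congr 1
        rw [tsum_mul_left]
        congr 1
        rw [Real.exp_eq_exp_ℝ, NormedSpace.exp_eq_tsum_div]

-- Cauchy-Schwarz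
lemma stmt16_cs {Ω : Type} [MeasurableSpace Ω] (P : Measure Ω) [IsProbabilityMeasure P]
    (f : Ω → ℝ≥0∞) (hf : AEMeasurable f P) :
    (∫⁻ ω, f ω ∂P) ^ 2 ≤ ∫⁻ ω, (f ω) ^ 2 ∂P := by
  have hpq : Real.HolderConjugate 2 2 := Real.holderConjugate_iff.mpr ⟨one_lt_two, by norm_num⟩
  have h := ENNReal.lintegral_mul_le_Lp_mul_Lq P hpq hf (aemeasurable_const (b := (1:ℝ≥0∞)))
  simp only [Pi.mul_apply, mul_one, ENNReal.one_rpow, lintegral_const, measure_univ,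
    one_mul, ENNReal.one_rpow, ENNReal.rpow_natCast] at h
  have h2 : ∀ a : ℝ≥0∞, a ^ (2:ℝ) = a ^ (2:ℕ) := fun a => by
    rw [show (2:ℝ) = ((2:ℕ):ℝ) by norm_num, ENNReal.rpow_natCast]
  simp only [h2] at h
  calc (∫⁻ ω, f ω ∂P) ^ 2 ≤ ((∫⁻ ω, f ω ^ 2 ∂P) ^ ((1:ℝ)/2)) ^ 2 := by
        exact pow_le_pow_left' h 2
    _ = ∫⁻ ω, f ω ^ 2 ∂P := by
        rw [← ENNReal.rpow_natCast ((∫⁻ ω, f ω ^ 2 ∂P) ^ ((1:ℝ)/2)) 2, ← ENNReal.rpow_mul]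
        norm_num


lemma stmt16_exp_sq {Ω : Type} [MeasurableSpace Ω] (P : Measure Ω) [IsProbabilityMeasure P]
    (Xi : Ω → ℝ) (hXi : Measurable Xi)
    (htail : ∀ t : ℝ, 0 ≤ t → P {ω | t < Xi ω} = ENNReal.ofReal (Real.exp (-t))) :
    ∫⁻ ω, ENNReal.ofReal ((Xi ω) ^ 2) ∂P = 2 := by
  set f : Ω → ℝ := fun ω => max (Xi ω) 0 with hf
  have hfm : Measurable f := hXi.max measurable_const
  -- a.e. positivity
  have hpos : ∀ᵐ ω ∂P, 0 < Xi ω := by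
    have h0 : P {ω | 0 < Xi ω} = 1 := by
      rw [htail 0 le_rfl]; simp
    have hms : MeasurableSet {ω | 0 < Xi ω} := measurableSet_lt measurable_const hXi
    rw [ae_iff]
    have : {ω | ¬ 0 < Xi ω} = {ω | 0 < Xi ω}ᶜ := by ext ω; simp
    rw [this, measure_compl hms (measure_ne_top _ _), h0, measure_univ, tsub_self]
  have hae : (fun ω => ENNReal.ofReal ((Xi ω) ^ 2)) =ᵐ[P] fun ω => ENNReal.ofReal ((f ω) ^ 2) := by
    filter_upwards [hpos] with ω hω
    simp [hf, max_eq_left hω.le]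
  rw [lintegral_congr_ae hae]
  have key := lintegral_rpow_eq_lintegral_meas_lt_mul P (f := f)
    (Filter.Eventually.of_forall (fun ω => le_max_right _ _ : ∀ ω, 0 ≤ f ω))
    hfm.aemeasurable (by norm_num : (0:ℝ) < 2)
  have hrw : ∀ ω, (f ω) ^ (2:ℝ) = (f ω) ^ 2 := fun ω => by
    rw [show (2:ℝ) = ((2:ℕ):ℝ) by norm_num, Real.rpow_natCast]
  simp only [hrw] at key
  rw [key]
  have hinner : (∫⁻ t in Ioi (0:ℝ), P {a | t < f a} * ENNReal.ofReal (t ^ ((2:ℝ) - 1)))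
      = ∫⁻ t in Ioi (0:ℝ), ENNReal.ofReal (Real.exp (-t) * t) := by
    apply setLIntegral_congr_fun measurableSet_Ioi
    intro t ht
    have hset : {a | t < f a} = {a | t < Xi a} := by
      ext a; simp [hf, lt_max_iff, (not_lt_of_gt ht : ¬ t < 0)]
    dsimp only
    rw [hset, htail t (le_of_lt ht), show (2:ℝ) - 1 = 1 by norm_num, Real.rpow_one,
      ← ENNReal.ofReal_mul (Real.exp_pos _).le]
  rw [hinner]
  have hGint : IntegrableOn (fun t : ℝ => Real.exp (-t) * t) (Ioi 0) := by
    have h := Real.GammaIntegral_convergent (by norm_num : (0:ℝ) < 2)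
    rw [show (2:ℝ) - 1 = 1 by norm_num] at h
    simpa [Real.rpow_one] using h
  have h1 : (∫⁻ t in Ioi (0:ℝ), ENNReal.ofReal (Real.exp (-t) * t))
      = ENNReal.ofReal (∫ t in Ioi (0:ℝ), Real.exp (-t) * t) := by
    rw [← ofReal_integral_eq_lintegral_ofReal hGint]
    filter_upwards [ae_restrict_mem measurableSet_Ioi] with t ht
    exact mul_nonneg (Real.exp_pos _).le (le_of_lt ht)
  rw [h1]
  have hGamma : (∫ t in Ioi (0:ℝ), Real.exp (-t) * t) = 1 := by
    have h := Real.Gamma_eq_integral (by norm_num : (0:ℝ) < 2)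
    rw [Real.Gamma_two, show (2:ℝ) - 1 = 1 by norm_num] at h
    simp only [Real.rpow_one] at h
    exact h.symm
  rw [hGamma]
  simp


/-- Second moment bound `E[(T^{N,-})²] ≤ C N / γ_{1,N}` for
`T^{N,-} = Γ_N^- 𝟙{ε̂_N = 0} - Ξ E[Γ_N^- 𝟙{ε̂_N = 0}]`, where `Γ_N^-`, `ε̂_N`, `Ξ` are
independent, `Γ_N^-` has law `p^{-,N}` on the positive integers,
`P(ε̂_N = 0) = α_{-,N}(1 - q_0^{-,N})/γ_{1,N}`, and `Ξ` is standard exponential;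
the constant `C` depends only on `μ`. -/
theorem stmt16 (μ : Measure ℝ) [SigmaFinite μ]
    (p : ℝ) (hp1 : 1 < p) (hp2 : p < 2)
    (hH : Integrable (fun r => max r (r ^ p)) (μ.restrict (Set.Ioi 0)))
    (hμ01 : μ (Set.Ioc 0 1) ≠ 0) (hμ1 : μ (Set.Ioi 1) ≠ 0) :
    ∃ C : ℝ, 0 < C ∧
      ∀ N : ℕ, 1 ≤ N →
      ∀ (Lval αm αp d1N q0m q01 γ1N : ℝ) (qm pm : ℕ → ℝ),
        Lval = (∫ r in Set.Ioi (0:ℝ), (Real.exp (-(N:ℝ) * r) - 1 + N * r) ∂μ) →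
        αm = (∫ r in Set.Ioc (0:ℝ) 1, r * (1 - Real.exp (-(N:ℝ) * r)) ∂μ) →
        αp = (∫ r in Set.Ioi (1:ℝ), r * (1 - Real.exp (-(N:ℝ) * r)) ∂μ) →
        0 < αm → 0 < αp →
        d1N = αm + αp →
        q0m = (1 / ((N:ℝ) * αm)) *
          ∫ r in Set.Ioc (0:ℝ) 1, (Real.exp (-(N:ℝ) * r) - 1 + N * r) ∂μ →
        q0m < 1 →
        q01 = Lval / ((N:ℝ) * d1N) →
        γ1N = d1N * (1 - q01) → 0 < γ1N →
        qm 0 = q0m → qm 1 = 0 →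
        (∀ k : ℕ, 2 ≤ k → qm k = (1 / ((Nat.factorial k : ℝ) * N * αm)) *
          ∫ r in Set.Ioc (0:ℝ) 1, ((N:ℝ) * r) ^ k * Real.exp (-(N:ℝ) * r) ∂μ) →
        (∀ k : ℕ, 1 ≤ k → pm k = qm (k + 1) / (1 - q0m)) →
        ∀ (Ω : Type) [MeasurableSpace Ω] (P : Measure Ω) [IsProbabilityMeasure P]
          (Γ : Ω → ℕ) (eps : Ω → ℕ) (Xi : Ω → ℝ),
          Measurable Γ → Measurable eps → Measurable Xi →
          (∀ ω, 1 ≤ Γ ω) →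
          (∀ k : ℕ, 1 ≤ k → P {ω | Γ ω = k} = ENNReal.ofReal (pm k)) →
          (∀ ω, eps ω ≤ 1) →
          P {ω | eps ω = 0} = ENNReal.ofReal (αm * (1 - q0m) / γ1N) →
          (∀ t : ℝ, 0 ≤ t → P {ω | t < Xi ω} = ENNReal.ofReal (Real.exp (-t))) →
          (∀ (A B : Set ℕ) (S : Set ℝ), MeasurableSet S →
            P (Γ ⁻¹' A ∩ eps ⁻¹' B ∩ Xi ⁻¹' S) =
              P (Γ ⁻¹' A) * P (eps ⁻¹' B) * P (Xi ⁻¹' S)) →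
          (∫ ω, ((if eps ω = 0 then (Γ ω : ℝ) else 0) -
              Xi ω * ∫ ω', (if eps ω' = 0 then (Γ ω' : ℝ) else 0) ∂P) ^ 2 ∂P)
            ≤ C * N / γ1N := by
    classical
  set C₁ : ℝ := ∫ r in Set.Ioc (0:ℝ) 1, r ∂μ with hC₁
  have hC₁nn : 0 ≤ C₁ := setIntegral_nonneg measurableSet_Ioc (fun r hr => hr.1.le)
  refine ⟨6 * C₁ + 6, by linarith, ?_⟩
  intro N hN Lval αm αp d1N q0m q01 γ1N qm pm hL hαm hαp hαm0 hαp0 hd hq0mdef hq0m1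
    hq01 hγ hγ0 hqm0 hqm1 hqmk hpmk Ω _ P _ Γ eps Xi hΓm hepsm hXim hΓ1 hΓlaw hepsle
    hepsP htail hindep
  have hN0 : (0:ℝ) < N := by exact_mod_cast hN
  have h1q : (0:ℝ) < 1 - q0m := by linarith
  -- integrability of r on Ioc 0 1
  have hrint : Integrable (fun r : ℝ => r) (μ.restrict (Set.Ioc 0 1)) := by
    have h1 : μ.restrict (Set.Ioc 0 1) ≤ μ.restrict (Set.Ioi 0) :=
      Measure.restrict_mono Set.Ioc_subset_Ioi_self le_rfl
    have h2 := hH.mono_measure h1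
    refine h2.mono' measurable_id.aestronglyMeasurable ?_
    filter_upwards [ae_restrict_mem measurableSet_Ioc] with r hr
    rw [Real.norm_eq_abs, abs_of_pos hr.1]
    exact le_max_left _ _
  -- the function X
  set X : Ω → ℝ := fun ω => if eps ω = 0 then (Γ ω : ℝ) else 0 with hX
  have hXm : Measurable X := by
    apply Measurable.ite _ (measurable_from_top.comp hΓm) measurable_const
    exact hepsm (measurableSet_singleton 0)
  have hXnn : ∀ ω, 0 ≤ X ω := by
    intro ω; by_cases h : eps ω = 0 <;> simp [hX, h]
  have hXsq : ∀ ω, X ω ≤ X ω ^ 2 := by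
    intro ω
    by_cases h : eps ω = 0
    · have h1 : (1:ℝ) ≤ (Γ ω : ℝ) := by exact_mod_cast hΓ1 ω
      simp only [hX, if_pos h]
      nlinarith
    · simp [hX, h]
  set I : ℝ≥0∞ := ∫⁻ ω, ENNReal.ofReal (X ω ^ 2) ∂P with hI
  set pe : ℝ≥0∞ := P {ω | eps ω = 0} with hpe
  -- measurable sets
  have hseteq : ∀ k : ℕ, {ω | Γ ω = k + 1 ∧ eps ω = 0} = Γ ⁻¹' {k+1} ∩ eps ⁻¹' {0} := by
    intro k; ext ω; simp
  have hsets : ∀ k : ℕ, MeasurableSet {ω | Γ ω = k + 1 ∧ eps ω = 0} := by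
    intro k
    rw [hseteq k]
    exact (hΓm (measurableSet_singleton _)).inter (hepsm (measurableSet_singleton _))
  have hPk : ∀ k : ℕ, P {ω | Γ ω = k + 1 ∧ eps ω = 0} = ENNReal.ofReal (pm (k+1)) * pe := by
    intro k
    rw [hseteq k]
    have h := hindep {k+1} {0} Set.univ MeasurableSet.univ
    simp only [Set.preimage_univ, Set.inter_univ, measure_univ, mul_one] at h
    have hg : P (Γ ⁻¹' {k+1}) = ENNReal.ofReal (pm (k+1)) := by
      rw [← hΓlaw (k+1) (by omega)]; rfl
    have he : P (eps ⁻¹' {0}) = pe := rfl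
    rw [h, hg, he]
  -- decompose I
  have hIdecomp : I = (∑' k : ℕ, ((k:ℝ≥0∞)+1)^2 * ENNReal.ofReal (pm (k+1))) * pe := by
    have hpt : ∀ ω, ENNReal.ofReal (X ω ^ 2) =
        ∑' k : ℕ, Set.indicator {ω' | Γ ω' = k + 1 ∧ eps ω' = 0}
          (fun _ => ((k:ℝ≥0∞)+1)^2) ω := by
      intro ω
      by_cases h : eps ω = 0
      · have h1 : 1 ≤ Γ ω := hΓ1 ω
        rw [tsum_eq_single (Γ ω - 1) ?_]
        · rw [Set.indicator_of_mem (by exact ⟨by omega, h⟩)]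
          simp only [hX, if_pos h]
          have h2 : Γ ω - 1 + 1 = Γ ω := by omega
          have hcast : ((Γ ω - 1 : ℕ):ℝ≥0∞) + 1 = ((Γ ω : ℕ):ℝ≥0∞) := by
            exact_mod_cast h2
          rw [ENNReal.ofReal_pow (Nat.cast_nonneg _), ENNReal.ofReal_natCast, hcast]
        · intro k hk
          apply Set.indicator_of_notMem
          intro hmem
          obtain ⟨hg, -⟩ := hmem
          exact hk (by omega)
      · simp only [hX, if_neg h]
        rw [show ((0:ℝ))^2 = 0 by norm_num, ENNReal.ofReal_zero]
        symm
        have : ∀ k : ℕ, Set.indicator {ω' | Γ ω' = k + 1 ∧ eps ω' = 0}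
            (fun _ => ((k:ℝ≥0∞)+1)^2) ω = 0 := by
          intro k
          exact Set.indicator_of_notMem (fun hmem => h hmem.2) _
        rw [tsum_congr this, tsum_zero]
    calc I = ∫⁻ ω, ∑' k : ℕ, Set.indicator {ω' | Γ ω' = k + 1 ∧ eps ω' = 0}
          (fun _ => ((k:ℝ≥0∞)+1)^2) ω ∂P := lintegral_congr hpt
      _ = ∑' k : ℕ, ∫⁻ ω, Set.indicator {ω' | Γ ω' = k + 1 ∧ eps ω' = 0}
          (fun _ => ((k:ℝ≥0∞)+1)^2) ω ∂P :=
            lintegral_tsum (fun k => (measurable_const.indicator (hsets k)).aemeasurable)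
      _ = ∑' k : ℕ, ((k:ℝ≥0∞)+1)^2 * P {ω' | Γ ω' = k + 1 ∧ eps ω' = 0} := by
            apply tsum_congr; intro k
            exact lintegral_indicator_const (hsets k) _
      _ = ∑' k : ℕ, ((k:ℝ≥0∞)+1)^2 * (ENNReal.ofReal (pm (k+1)) * pe) := by
            apply tsum_congr; intro k; rw [hPk k]
      _ = (∑' k : ℕ, ((k:ℝ≥0∞)+1)^2 * ENNReal.ofReal (pm (k+1))) * pe := by
            rw [← ENNReal.tsum_mul_right]
            apply tsum_congr; intro k; ring
  -- integrability of the q-integrands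
  have hIkint : ∀ k : ℕ, Integrable (fun r : ℝ => ((N:ℝ)*r)^(k+2) * Real.exp (-(N:ℝ)*r))
      (μ.restrict (Set.Ioc 0 1)) := by
    intro k
    refine (hrint.const_mul ((N:ℝ)^(k+2))).mono' ?_ ?_
    · apply Continuous.aestronglyMeasurable
      fun_prop
    · filter_upwards [ae_restrict_mem measurableSet_Ioc] with r hr
      have h1 : (0:ℝ) < r := hr.1
      have h2 : r ≤ 1 := hr.2
      rw [Real.norm_eq_abs, abs_of_nonneg (by positivity)]
      have he : Real.exp (-(N:ℝ)*r) ≤ 1 := by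
        rw [Real.exp_le_one_iff]; nlinarith
      have hp2 : r^(k+2) ≤ r := pow_le_of_le_one h1.le h2 (by omega)
      calc ((N:ℝ)*r)^(k+2) * Real.exp (-(N:ℝ)*r) ≤ ((N:ℝ)*r)^(k+2) * 1 :=
            mul_le_mul_of_nonneg_left he (by positivity)
        _ = (N:ℝ)^(k+2) * r^(k+2) := by rw [mul_one, mul_pow]
        _ ≤ (N:ℝ)^(k+2) * r := mul_le_mul_of_nonneg_left hp2 (by positivity)
  have haerm : ∀ k : ℕ, 0 ≤ᵐ[μ.restrict (Set.Ioc 0 1)]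
      fun r : ℝ => ((N:ℝ)*r)^(k+2) * Real.exp (-(N:ℝ)*r) := by
    intro k
    filter_upwards [ae_restrict_mem measurableSet_Ioc] with r hr
    exact mul_nonneg (pow_nonneg (mul_nonneg (Nat.cast_nonneg N) hr.1.le) _) (Real.exp_pos _).le
  have hfkm : ∀ k : ℕ,
      Measurable fun r : ℝ => ENNReal.ofReal (((N:ℝ)*r)^(k+2) * Real.exp (-(N:ℝ)*r)) := by
    intro k
    apply Measurable.ennreal_ofReal
    fun_prop
  have hofqm : ∀ k : ℕ, ENNReal.ofReal (qm (k+2)) =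
      ENNReal.ofReal (1 / ((Nat.factorial (k+2) : ℝ) * N * αm)) *
      ∫⁻ r in Set.Ioc (0:ℝ) 1, ENNReal.ofReal (((N:ℝ)*r)^(k+2) * Real.exp (-(N:ℝ)*r)) ∂μ := by
    intro k
    rw [hqmk (k+2) (by omega), ENNReal.ofReal_mul (by positivity),
      ofReal_integral_eq_lintegral_ofReal (hIkint k) (haerm k)]
  -- tail sum bound
  have hTbound : (∑' k : ℕ, ((k:ℝ≥0∞)+1)^2 * ENNReal.ofReal (qm (k+2)))
      ≤ ENNReal.ofReal ((N:ℝ)/αm * C₁) := by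
    have hstep1 : ∀ k : ℕ, ((k:ℝ≥0∞)+1)^2 * ENNReal.ofReal (qm (k+2)) =
        ∫⁻ r in Set.Ioc (0:ℝ) 1,
          (((k:ℝ≥0∞)+1)^2 * ENNReal.ofReal (1 / ((Nat.factorial (k+2) : ℝ) * N * αm))) *
          ENNReal.ofReal (((N:ℝ)*r)^(k+2) * Real.exp (-(N:ℝ)*r)) ∂μ := by
      intro k
      rw [hofqm k, lintegral_const_mul _ (hfkm k)]
      ring
    have hpoint : ∀ r ∈ Set.Ioc (0:ℝ) 1,
        (∑' k : ℕ, (((k:ℝ≥0∞)+1)^2 * ENNReal.ofReal (1 / ((Nat.factorial (k+2) : ℝ) * N * αm))) *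
          ENNReal.ofReal (((N:ℝ)*r)^(k+2) * Real.exp (-(N:ℝ)*r)))
          ≤ ENNReal.ofReal ((N:ℝ) * r^2 / αm) := by
      intro r hr
      have hx : (0:ℝ) < (N:ℝ)*r := mul_pos hN0 hr.1
      have hterm : ∀ k : ℕ,
          (((k:ℝ≥0∞)+1)^2 * ENNReal.ofReal (1 / ((Nat.factorial (k+2) : ℝ) * N * αm))) *
            ENNReal.ofReal (((N:ℝ)*r)^(k+2) * Real.exp (-(N:ℝ)*r)) =
          ENNReal.ofReal (Real.exp (-((N:ℝ)*r)) / ((N:ℝ)*αm)) *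
            ENNReal.ofReal (((k:ℝ)+1)^2 * ((N:ℝ)*r)^(k+2) / (Nat.factorial (k+2))) := by
        intro k
        have hk1 : ((k:ℝ≥0∞)+1) = ENNReal.ofReal ((k:ℝ)+1) := by
          rw [ENNReal.ofReal_add (Nat.cast_nonneg k) zero_le_one, ENNReal.ofReal_natCast,
            ENNReal.ofReal_one]
        rw [hk1, ← ENNReal.ofReal_pow (by positivity), ← ENNReal.ofReal_mul (by positivity),
          ← ENNReal.ofReal_mul (by positivity), ← ENNReal.ofReal_mul
          (div_nonneg (Real.exp_pos _).le (mul_nonneg (Nat.cast_nonneg N) hαm0.le))]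
        congr 1
        have hF : (0:ℝ) < (Nat.factorial (k+2) : ℝ) := by positivity
        field_simp
      rw [tsum_congr hterm, ENNReal.tsum_mul_left]
      have hneg : -((N:ℝ)*r) = -(N:ℝ)*r := by ring
      calc ENNReal.ofReal (Real.exp (-((N:ℝ)*r)) / ((N:ℝ)*αm)) *
            (∑' k : ℕ, ENNReal.ofReal (((k:ℝ)+1)^2 * ((N:ℝ)*r)^(k+2) / (Nat.factorial (k+2))))
          ≤ ENNReal.ofReal (Real.exp (-((N:ℝ)*r)) / ((N:ℝ)*αm)) *
            ENNReal.ofReal (((N:ℝ)*r)^2 * Real.exp ((N:ℝ)*r)) :=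
            mul_le_mul_right (stmt16_series ((N:ℝ)*r) hx.le) _
        _ = ENNReal.ofReal ((N:ℝ) * r^2 / αm) := by
            rw [← ENNReal.ofReal_mul
              (div_nonneg (Real.exp_pos _).le (mul_nonneg (Nat.cast_nonneg N) hαm0.le))]
            congr 1
            rw [Real.exp_neg]
            have hexp : (0:ℝ) < Real.exp ((N:ℝ)*r) := Real.exp_pos _
            field_simp
    calc (∑' k : ℕ, ((k:ℝ≥0∞)+1)^2 * ENNReal.ofReal (qm (k+2)))
        = ∫⁻ r in Set.Ioc (0:ℝ) 1, ∑' k : ℕ,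
            (((k:ℝ≥0∞)+1)^2 * ENNReal.ofReal (1 / ((Nat.factorial (k+2) : ℝ) * N * αm))) *
            ENNReal.ofReal (((N:ℝ)*r)^(k+2) * Real.exp (-(N:ℝ)*r)) ∂μ := by
          rw [tsum_congr hstep1]
          exact (lintegral_tsum (fun k => ((hfkm k).const_mul _).aemeasurable)).symm
      _ ≤ ∫⁻ r in Set.Ioc (0:ℝ) 1, ENNReal.ofReal ((N:ℝ) * r^2 / αm) ∂μ := by
          apply setLIntegral_mono (by fun_prop) hpoint
      _ = ENNReal.ofReal ((N:ℝ)/αm) * ∫⁻ r in Set.Ioc (0:ℝ) 1, ENNReal.ofReal (r^2) ∂μ := by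
          have hr2 : ∀ r : ℝ, ENNReal.ofReal ((N:ℝ) * r^2 / αm) =
              ENNReal.ofReal ((N:ℝ)/αm) * ENNReal.ofReal (r^2) := by
            intro r
            rw [← ENNReal.ofReal_mul (div_nonneg (Nat.cast_nonneg N) hαm0.le)]
            congr 1
            ring
          simp_rw [hr2]
          exact lintegral_const_mul _ (by fun_prop)
      _ ≤ ENNReal.ofReal ((N:ℝ)/αm) * ∫⁻ r in Set.Ioc (0:ℝ) 1, ENNReal.ofReal r ∂μ := by
          apply mul_le_mul_right
          apply setLIntegral_mono (by fun_prop)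
          intro r hr
          exact ENNReal.ofReal_le_ofReal (by nlinarith [hr.1, hr.2])
      _ = ENNReal.ofReal ((N:ℝ)/αm) * ENNReal.ofReal C₁ := by
          rw [← ofReal_integral_eq_lintegral_ofReal hrint]
          filter_upwards [ae_restrict_mem measurableSet_Ioc] with r hr
          exact hr.1.le
      _ = ENNReal.ofReal ((N:ℝ)/αm * C₁) :=
          (ENNReal.ofReal_mul (div_nonneg (Nat.cast_nonneg N) hαm0.le)).symm
  -- nonnegativity of qm
  have hqmnn : ∀ k : ℕ, 0 ≤ qm (k+2) := by
    intro k
    rw [hqmk (k+2) (by omega)]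
    apply mul_nonneg (by positivity)
    apply setIntegral_nonneg measurableSet_Ioc
    intro r hr
    exact mul_nonneg (pow_nonneg (mul_nonneg (Nat.cast_nonneg N) hr.1.le) _) (Real.exp_pos _).le
  -- bound the law sum
  have hS : (∑' k : ℕ, ((k:ℝ≥0∞)+1)^2 * ENNReal.ofReal (pm (k+1)))
      ≤ ENNReal.ofReal ((N:ℝ)/αm * C₁) * ENNReal.ofReal ((1-q0m)⁻¹) := by
    have hpmq : ∀ k : ℕ, ENNReal.ofReal (pm (k+1)) =
        ENNReal.ofReal (qm (k+2)) * ENNReal.ofReal ((1-q0m)⁻¹) := by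
      intro k
      rw [hpmk (k+1) (by omega), div_eq_mul_inv, ENNReal.ofReal_mul (hqmnn k)]
    calc (∑' k : ℕ, ((k:ℝ≥0∞)+1)^2 * ENNReal.ofReal (pm (k+1)))
        = (∑' k : ℕ, ((k:ℝ≥0∞)+1)^2 * ENNReal.ofReal (qm (k+2))) * ENNReal.ofReal ((1-q0m)⁻¹) := by
          rw [← ENNReal.tsum_mul_right]
          exact tsum_congr fun k => by rw [hpmq k, mul_assoc]
      _ ≤ ENNReal.ofReal ((N:ℝ)/αm * C₁) * ENNReal.ofReal ((1-q0m)⁻¹) :=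
          mul_le_mul_left hTbound _
  -- main bound for I
  have hIle : I ≤ ENNReal.ofReal (C₁ * N / γ1N) := by
    rw [hIdecomp, hepsP]
    calc (∑' k : ℕ, ((k:ℝ≥0∞)+1)^2 * ENNReal.ofReal (pm (k+1))) *
          ENNReal.ofReal (αm * (1 - q0m) / γ1N)
        ≤ (ENNReal.ofReal ((N:ℝ)/αm * C₁) * ENNReal.ofReal ((1-q0m)⁻¹)) *
          ENNReal.ofReal (αm * (1 - q0m) / γ1N) := mul_le_mul_left hS _
      _ = ENNReal.ofReal (((N:ℝ)/αm * C₁) * ((1-q0m)⁻¹ * (αm * (1 - q0m) / γ1N))) := by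
          rw [mul_assoc, ← ENNReal.ofReal_mul (inv_nonneg.mpr h1q.le),
            ← ENNReal.ofReal_mul (mul_nonneg (div_nonneg (Nat.cast_nonneg N) hαm0.le) hC₁nn)]
      _ = ENNReal.ofReal (C₁ * N / γ1N) := by
          congr 1
          field_simp
  -- the mean m
  set m : ℝ := ∫ ω, X ω ∂P with hm
  have hXint : Integrable X P := by
    constructor
    · exact hXm.aestronglyMeasurable
    · rw [hasFiniteIntegral_iff_ofReal (Filter.Eventually.of_forall hXnn)]
      calc (∫⁻ ω, ENNReal.ofReal (X ω) ∂P) ≤ I :=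
            lintegral_mono fun ω => ENNReal.ofReal_le_ofReal (hXsq ω)
        _ ≤ ENNReal.ofReal (C₁ * N / γ1N) := hIle
        _ < ⊤ := ENNReal.ofReal_lt_top
  have hmnn : 0 ≤ m := integral_nonneg hXnn
  have hmof : ENNReal.ofReal m = ∫⁻ ω, ENNReal.ofReal (X ω) ∂P :=
    ofReal_integral_eq_lintegral_ofReal hXint (Filter.Eventually.of_forall hXnn)
  have hm2 : ENNReal.ofReal (m^2) ≤ I := by
    rw [ENNReal.ofReal_pow hmnn, hmof]
    calc (∫⁻ ω, ENNReal.ofReal (X ω) ∂P)^2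
        ≤ ∫⁻ ω, (ENNReal.ofReal (X ω))^2 ∂P :=
          stmt16_cs P _ (hXm.ennreal_ofReal.aemeasurable)
      _ = I := lintegral_congr fun ω => by rw [← ENNReal.ofReal_pow (hXnn ω)]
  -- second moment of Xi
  have hXi2 : ∫⁻ ω, ENNReal.ofReal ((Xi ω)^2) ∂P = 2 := stmt16_exp_sq P Xi hXim htail
  -- final assembly
  have hbound : (∫⁻ ω, ENNReal.ofReal ((X ω - Xi ω * m)^2) ∂P)
      ≤ ENNReal.ofReal ((6 * C₁ + 6) * N / γ1N) := by
    have hptF : ∀ ω, ENNReal.ofReal ((X ω - Xi ω * m)^2) ≤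
        2 * ENNReal.ofReal (X ω ^ 2) + 2 * (ENNReal.ofReal (m^2) * ENNReal.ofReal ((Xi ω)^2)) := by
      intro ω
      have h1 : (X ω - Xi ω * m)^2 ≤ 2 * X ω ^ 2 + 2 * (m^2 * Xi ω ^ 2) := by
        have h2 : m^2 * Xi ω ^ 2 = (Xi ω * m)^2 := by ring
        rw [h2]
        exact stmt16_sq_sub_le _ _
      calc ENNReal.ofReal ((X ω - Xi ω * m)^2)
          ≤ ENNReal.ofReal (2 * X ω ^ 2 + 2 * (m^2 * Xi ω ^ 2)) := ENNReal.ofReal_le_ofReal h1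
        _ = 2 * ENNReal.ofReal (X ω ^ 2) + 2 * (ENNReal.ofReal (m^2) * ENNReal.ofReal ((Xi ω)^2)) := by
            rw [ENNReal.ofReal_add (by positivity) (by positivity),
              ENNReal.ofReal_mul (by norm_num), ENNReal.ofReal_mul (by norm_num),
              ENNReal.ofReal_mul (sq_nonneg m), ENNReal.ofReal_ofNat]
    have hmeas1 : Measurable fun ω => 2 * ENNReal.ofReal (X ω ^ 2) :=
      ((hXm.pow_const 2).ennreal_ofReal).const_mul 2
    have hmeas2 : Measurable fun ω => ENNReal.ofReal ((Xi ω)^2) :=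
      (hXim.pow_const 2).ennreal_ofReal
    calc (∫⁻ ω, ENNReal.ofReal ((X ω - Xi ω * m)^2) ∂P)
        ≤ ∫⁻ ω, (2 * ENNReal.ofReal (X ω ^ 2) +
            2 * (ENNReal.ofReal (m^2) * ENNReal.ofReal ((Xi ω)^2))) ∂P := lintegral_mono hptF
      _ = 2 * I + 2 * (ENNReal.ofReal (m^2) * 2) := by
          rw [lintegral_add_left hmeas1, lintegral_const_mul 2 ((hXm.pow_const 2).ennreal_ofReal),
            lintegral_const_mul 2 (hmeas2.const_mul _),
            lintegral_const_mul (ENNReal.ofReal (m^2)) hmeas2, hXi2]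
      _ ≤ 2 * ENNReal.ofReal (C₁ * N / γ1N) + 2 * (ENNReal.ofReal (C₁ * N / γ1N) * 2) := by
          apply add_le_add (mul_le_mul_right hIle 2)
          exact mul_le_mul_right (mul_le_mul_left (hm2.trans hIle) 2) 2
      _ = 6 * ENNReal.ofReal (C₁ * N / γ1N) := by ring
      _ = ENNReal.ofReal (6 * (C₁ * N / γ1N)) := by
          rw [ENNReal.ofReal_mul (by norm_num), ENNReal.ofReal_ofNat]
      _ ≤ ENNReal.ofReal ((6 * C₁ + 6) * N / γ1N) := by
          apply ENNReal.ofReal_le_ofReal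
          have hdiv : 0 ≤ (N:ℝ) / γ1N := div_nonneg (Nat.cast_nonneg N) hγ0.le
          calc 6 * (C₁ * N / γ1N) = (6 * C₁) * ((N:ℝ) / γ1N) := by ring
            _ ≤ (6 * C₁ + 6) * ((N:ℝ) / γ1N) :=
                mul_le_mul_of_nonneg_right (by linarith) hdiv
            _ = (6 * C₁ + 6) * N / γ1N := by ring
  have hFnn : ∀ ω, 0 ≤ (X ω - Xi ω * m)^2 := fun ω => sq_nonneg _
  have hFm : AEStronglyMeasurable (fun ω => (X ω - Xi ω * m)^2) P :=
    ((hXm.sub (hXim.mul_const m)).pow_const 2).aestronglyMeasurable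
  rw [integral_eq_lintegral_of_nonneg_ae (Filter.Eventually.of_forall hFnn) hFm]
  apply ENNReal.toReal_le_of_le_ofReal
  · have hdiv : 0 ≤ (N:ℝ) / γ1N := div_nonneg (Nat.cast_nonneg N) hγ0.le
    have : (6 * C₁ + 6) * N / γ1N = (6 * C₁ + 6) * ((N:ℝ) / γ1N) := by ring
    rw [this]
    apply mul_nonneg (by linarith) hdiv
  · exact hbound
end
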